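/- arXiv:2403.03237 — 3 statements merged into one kernel-verified Lean document; each statement's English description precedes it below -/
import Mathlib

section
/- For every integer k ≥ 1, every real θ, and every index j ∈ {1,…,k}, the operator H^{⊗k} · exp(iθ h_k) · H^{⊗k} commutes with the bit-flip on the j-th qubit: (H^{⊗k} exp(iθ h_k) H^{⊗k}) · X^{(j)} = X^{(j)} · (H^{⊗k} exp(iθ h_k) H^{⊗k}). -/
open Matrix Finset

/-- Tensor (Kronecker) product of a family of 2×2 complex matrices, one per qubit. -/
noncomputable def tens {n : ℕ} (M : Fin n → Matrix (Fin 2) (Fin 2) ℂ) :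
    Matrix (Fin n → Fin 2) (Fin n → Fin 2) ℂ :=
  Matrix.of fun x y => ∏ j, M j (x j) (y j)

/-- `n`-fold Kronecker power of a 2×2 complex matrix. -/
noncomputable def kpow (n : ℕ) (A : Matrix (Fin 2) (Fin 2) ℂ) :
    Matrix (Fin n → Fin 2) (Fin n → Fin 2) ℂ := tens (fun _ => A)

/-- `σ_{z+} = [[1,0],[0,0]]`, the projection onto `|0⟩`. -/
noncomputable def sigmaZP : Matrix (Fin 2) (Fin 2) ℂ := !![1, 0; 0, 0]

/-- The Hadamard gate. -/
noncomputable def hadamard : Matrix (Fin 2) (Fin 2) ℂ :=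
  (Real.sqrt 2 : ℂ)⁻¹ • !![1, 1; 1, -1]

/-- The bit-flip gate `X`. -/
noncomputable def gateX : Matrix (Fin 2) (Fin 2) ℂ := !![0, 1; 1, 0]

/-- The operator `B^{(j)}`: `B` on qubit `j`, identity elsewhere. -/
noncomputable def localAt {n : ℕ} (B : Matrix (Fin 2) (Fin 2) ℂ) (j : Fin n) :
    Matrix (Fin n → Fin 2) (Fin n → Fin 2) ℂ :=
  tens (fun l => if l = j then B else 1)

/-
Conjugation by `H^{⊗k}` (an involution) turns `X^{(j)}` into `(HXH)^{(j)} = Z^{(j)}`,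
which commutes with `h_k` factor by factor because `Z` and `σ_{z+}` are both diagonal. Hence
`Z^{(j)}` commutes with `exp(iθ h_k)`, and conjugating back by `H^{⊗k}` gives the claim.
-/

lemma Commute.conj_of_mul_self_eq_one {M : Type*} [Monoid M] {K A E : M} (hK : K * K = 1)
    (h : Commute (K * A * K) E) : Commute (K * E * K) A :=
  calc K * E * K * A = K * (E * (K * A * K)) * K := by
        rw [← mul_one (K * E * K * A), ← hK]
        simp only [mul_assoc]
    _ = K * (K * A * K * E) * K := by rw [h.eq]
    _ = A * (K * E * K) := by
        rw [← one_mul (A * (K * E * K)), ← hK]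
        simp only [mul_assoc]

lemma tens_mul {n : ℕ} (M N : Fin n → Matrix (Fin 2) (Fin 2) ℂ) :
    tens M * tens N = tens (fun j => M j * N j) := by
  ext x z
  simp only [tens, Matrix.mul_apply, Matrix.of_apply]
  rw [Finset.prod_univ_sum, Fintype.piFinset_univ]
  exact Finset.sum_congr rfl fun y _ => Finset.prod_mul_distrib.symm

lemma tens_one {n : ℕ} : tens (fun _ : Fin n => (1 : Matrix (Fin 2) (Fin 2) ℂ)) = 1 := by
  ext x y
  by_cases h : x = y
  · subst h
    simp [tens, Matrix.one_apply]
  · obtain ⟨l, hl⟩ := Function.ne_iff.mp h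
    simp only [tens, Matrix.of_apply, Matrix.one_apply, if_neg h]
    exact Finset.prod_eq_zero (Finset.mem_univ l) (by simp [hl])

lemma tens_commute {n : ℕ} {M N : Fin n → Matrix (Fin 2) (Fin 2) ℂ}
    (h : ∀ l, Commute (M l) (N l)) : Commute (tens M) (tens N) := by
  rw [Commute, SemiconjBy, tens_mul, tens_mul]
  exact congrArg tens (funext fun l => (h l).eq)

lemma kpow_mul_self {n : ℕ} {A : Matrix (Fin 2) (Fin 2) ℂ} (hA : A * A = 1) :
    kpow n A * kpow n A = 1 := by
  rw [kpow, tens_mul]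
  simp only [hA]
  exact tens_one

lemma kpow_mul_localAt_mul_kpow {n : ℕ} {A : Matrix (Fin 2) (Fin 2) ℂ} (hA : A * A = 1)
    (B : Matrix (Fin 2) (Fin 2) ℂ) (j : Fin n) :
    kpow n A * localAt B j * kpow n A = localAt (A * B * A) j := by
  rw [kpow, localAt, localAt, tens_mul, tens_mul]
  refine congrArg tens (funext fun l => ?_)
  split_ifs
  · rfl
  · rw [mul_one, hA]

lemma localAt_commute_kpow {n : ℕ} {C S : Matrix (Fin 2) (Fin 2) ℂ} (h : Commute C S)
    (j : Fin n) : Commute (localAt C j) (kpow n S) :=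
  tens_commute fun l => by
    split_ifs
    · exact h
    · exact Commute.one_left S

lemma ofReal_sqrt_two_sq : ((Real.sqrt 2 : ℝ) : ℂ) ^ 2 = 2 := by
  norm_cast
  simp

lemma hadamard_mul_self : hadamard * hadamard = 1 := by
  ext i j
  fin_cases i <;> fin_cases j <;>
    simp [_root_.hadamard, Matrix.mul_apply, Fin.sum_univ_two] <;>
    field_simp <;> norm_num [ofReal_sqrt_two_sq]

lemma hadamard_mul_gateX_mul_hadamard : hadamard * gateX * hadamard = !![1, 0; 0, -1] := by
  ext i j
  fin_cases i <;> fin_cases j <;>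
    simp [_root_.hadamard, gateX, Matrix.mul_apply, Fin.sum_univ_two] <;>
    field_simp <;> norm_num [ofReal_sqrt_two_sq]

lemma commute_pauliZ_sigmaZP : Commute !![(1 : ℂ), 0; 0, -1] sigmaZP := by
  rw [Commute, SemiconjBy, sigmaZP]
  ext i j
  fin_cases i <;> fin_cases j <;> simp

theorem hadamard_exp_hk_hadamard_comm_X_general (k : ℕ) (θ : ℝ) (j : Fin k) :
    (kpow k hadamard * NormedSpace.exp ((Complex.I * (θ : ℂ)) • kpow k sigmaZP) *
        kpow k hadamard) * localAt gateX j
      = localAt gateX j *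
        (kpow k hadamard * NormedSpace.exp ((Complex.I * (θ : ℂ)) • kpow k sigmaZP) *
          kpow k hadamard) := by
  have hZ : Commute (kpow k hadamard * localAt gateX j * kpow k hadamard)
      (NormedSpace.exp ((Complex.I * (θ : ℂ)) • kpow k sigmaZP)) := by
    rw [kpow_mul_localAt_mul_kpow hadamard_mul_self, hadamard_mul_gateX_mul_hadamard]
    exact ((localAt_commute_kpow commute_pauliZ_sigmaZP j).smul_right _).exp_right
  exact (Commute.conj_of_mul_self_eq_one (kpow_mul_self hadamard_mul_self) hZ).eq

/-- `H^{⊗k} exp(iθ h_k) H^{⊗k}` commutes with the bit-flip on any qubit `j`, where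
`h_k = σ_{z+}^{⊗k}`. -/
theorem hadamard_exp_hk_hadamard_comm_X (k : ℕ) (hk : 1 ≤ k) (θ : ℝ) (j : Fin k) :
    (kpow k hadamard * NormedSpace.exp ((Complex.I * (θ : ℂ)) • kpow k sigmaZP) *
        kpow k hadamard) * localAt gateX j
      = localAt gateX j *
        (kpow k hadamard * NormedSpace.exp ((Complex.I * (θ : ℂ)) • kpow k sigmaZP) *
          kpow k hadamard) :=
  hadamard_exp_hk_hadamard_comm_X_general k θ j
end

section
/- Fix integers n ≥ k ≥ 1, a target t ∈ {0,1}^n, a real θ, and an integer p ≥ 0. Let X_C = ⊗_{j=1}^n X^{t_j} (where X^0 = I₂, X^1 = X). Then the k-local quantum search circuit with target t reduces to the circuit with target 0^n: (H^{⊗n} exp(−iθ H_{n,k,0}) H^{⊗n} · exp(−iθ H_{n,k,t}))^p |+⟩^{⊗n} = X_C · (H^{⊗n} exp(−iθ H_{n,k,0}) H^{⊗n} · exp(−iθ H_{n,k,0}))^p |+⟩^{⊗n}, where |+⟩^{⊗n} = 2^{−n/2} Σ_{x ∈ {0,1}^n} |x⟩. -/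
open Matrix Finset

/-- Number of positions where `x` agrees with `t`. -/
def agree {n : ℕ} (x t : Fin n → Fin 2) : ℕ :=
  (Finset.univ.filter (fun j => x j = t j)).card

/-- The `k`-local search Hamiltonian `H_{n,k,t}`: diagonal with entry `C(d,k)/C(n,k)` at the
basis state `x`, where `d` is the number of positions where `x` agrees with `t`. -/
noncomputable def Hsearch (n k : ℕ) (t : Fin n → Fin 2) :
    Matrix (Fin n → Fin 2) (Fin n → Fin 2) ℂ :=
  Matrix.diagonal (fun x => ((agree x t).choose k : ℂ) / (n.choose k : ℂ))

/-- `|+⟩^{⊗n} = 2^{-n/2} ∑_x |x⟩`. -/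
noncomputable def plusVec (n : ℕ) : (Fin n → Fin 2) → ℂ :=
  fun _ => (Real.sqrt 2 : ℂ)⁻¹ ^ n

/-! `X_C` is the permutation matrix of the translation `x ↦ x + t` of `(ℤ/2)ⁿ`, and conjugating
by it reindexes a matrix along that translation. Reindexing turns `H_{n,k,0}` into `H_{n,k,t}`,
because `x + t = 0` exactly where `x = t`, and it leaves `H^{⊗n} D H^{⊗n}` unchanged for every
diagonal `D`, because translating the row of one Hadamard factor and the column of the other by
`t` multiplies each of them by the same sign `(-1)^{t·z}`. So the target-`t` circuit is the
target-`0` circuit conjugated by `X_C`, and `X_C` fixes the constant vector `|+⟩^{⊗n}`. -/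

variable {ι κ 𝔸 : Type*} [Fintype ι] [DecidableEq ι] [Fintype κ] [DecidableEq κ]

theorem Matrix.submatrix_equiv_pow [Semiring 𝔸] (M : Matrix ι ι 𝔸) (e : κ ≃ ι) (p : ℕ) :
    (M ^ p).submatrix e e = M.submatrix e e ^ p :=
  map_pow (reindexRingEquiv 𝔸 e.symm) M p

theorem Matrix.exp_submatrix_equiv [Ring 𝔸] [TopologicalSpace 𝔸] [IsTopologicalRing 𝔸]
    [T2Space 𝔸] [Algebra ℚ 𝔸] (A : Matrix ι ι 𝔸) (e : κ ≃ ι) :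
    NormedSpace.exp (A.submatrix e e) = (NormedSpace.exp A).submatrix e e := by
  simp_rw [NormedSpace.exp_eq_tsum_rat, ← submatrix_equiv_pow]
  exact (Function.LeftInverse.map_tsum (fun n : ℕ => (n.factorial⁻¹ : ℚ) • A ^ n)
    (g := reindexRingEquiv 𝔸 e.symm) (g' := fun M => M.submatrix e.symm e.symm)
    (continuous_id.matrix_submatrix _ _) (continuous_id.matrix_submatrix _ _)
    (fun M => by simp)).symm

theorem Matrix.mul_submatrix_pow_mulVec [Semiring 𝔸] (σ : ι ≃ ι) {B : Matrix ι ι 𝔸}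
    (hB : B.submatrix σ σ = B) (D : Matrix ι ι 𝔸) (p : ℕ) {v : ι → 𝔸} (hv : v ∘ σ.symm = v) :
    (B * D.submatrix σ σ) ^ p *ᵥ v = σ.toPEquiv.toMatrix *ᵥ ((B * D) ^ p *ᵥ v) := by
  rw [← hB, submatrix_mul_equiv, ← submatrix_equiv_pow, submatrix_mulVec_equiv, hv, hB,
    PEquiv.toMatrix_toPEquiv_mulVec]

section Qubits

variable {n : ℕ}

theorem tens_ite_gateX_eq_toMatrix_addRight (t : Fin n → Fin 2) :
    tens (fun j => if t j = 0 then (1 : Matrix (Fin 2) (Fin 2) ℂ) else gateX)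
      = (Equiv.addRight t).toPEquiv.toMatrix := by
  have flip_apply (c a b : Fin 2) :
      (if c = 0 then (1 : Matrix (Fin 2) (Fin 2) ℂ) else gateX) a b
        = if a + c = b then 1 else 0 := by
    fin_cases a <;> fin_cases b <;> fin_cases c <;> simp [gateX, one_apply]
  ext x y
  simp [tens, flip_apply, Fintype.prod_boole, funext_iff, eq_comm]

theorem agree_add_zero (x t : Fin n → Fin 2) : agree (x + t) (fun _ => 0) = agree x t := by
  have add_eq_zero_iff (a b : Fin 2) : a + b = 0 ↔ a = b := by revert a b; decide
  simp only [agree, Pi.add_apply, add_eq_zero_iff]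

theorem Hsearch_zero_submatrix_addRight (k : ℕ) (t : Fin n → Fin 2) :
    (Hsearch n k (fun _ => 0)).submatrix (Equiv.addRight t) (Equiv.addRight t)
      = Hsearch n k t := by
  rw [Hsearch, Hsearch, submatrix_diagonal_equiv]
  simp only [Function.comp_def, Equiv.coe_addRight, agree_add_zero]

theorem hadamard_add_mul_hadamard_add (a b c d : Fin 2) :
    _root_.hadamard (a + c) b * _root_.hadamard b (d + c)
      = _root_.hadamard a b * _root_.hadamard b d := by
  fin_cases a <;> fin_cases b <;> fin_cases c <;> fin_cases d <;>
    simp [_root_.hadamard, Matrix.smul_apply]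

theorem kpow_hadamard_add_mul_kpow_hadamard_add (t x y z : Fin n → Fin 2) :
    kpow n hadamard (x + t) z * kpow n hadamard z (y + t)
      = kpow n hadamard x z * kpow n hadamard z y := by
  simp only [kpow, tens, of_apply, ← prod_mul_distrib, Pi.add_apply,
    hadamard_add_mul_hadamard_add]

theorem kpow_hadamard_mul_diagonal_mul_kpow_hadamard_submatrix_addRight
    (t : Fin n → Fin 2) (d : (Fin n → Fin 2) → ℂ) :
    (kpow n hadamard * diagonal d * kpow n hadamard).submatrix
        (Equiv.addRight t) (Equiv.addRight t)
      = kpow n hadamard * diagonal d * kpow n hadamard := by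
  ext x y
  rw [submatrix_apply, mul_apply, mul_apply]
  simp_rw [mul_diagonal, mul_right_comm _ (d _), Equiv.coe_addRight,
    kpow_hadamard_add_mul_kpow_hadamard_add]

end Qubits

theorem k_local_search_target_reduction_general (n k : ℕ)
    (t : Fin n → Fin 2) (θ : ℝ) (p : ℕ) :
    ((kpow n hadamard *
        NormedSpace.exp ((-(Complex.I * (θ : ℂ))) • Hsearch n k (fun _ => 0)) *
        kpow n hadamard *
        NormedSpace.exp ((-(Complex.I * (θ : ℂ))) • Hsearch n k t)) ^ p).mulVec (plusVec n)
      = (tens (fun j => if t j = 0 then (1 : Matrix (Fin 2) (Fin 2) ℂ) else gateX)).mulVec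
          (((kpow n hadamard *
              NormedSpace.exp ((-(Complex.I * (θ : ℂ))) • Hsearch n k (fun _ => 0)) *
              kpow n hadamard *
              NormedSpace.exp ((-(Complex.I * (θ : ℂ))) • Hsearch n k (fun _ => 0))) ^ p).mulVec
            (plusVec n)) := by
  set c : ℂ := -(Complex.I * (θ : ℂ))
  obtain ⟨d, hd⟩ : ∃ d, NormedSpace.exp (c • Hsearch n k (fun _ => 0)) = diagonal d :=
    ⟨_, by rw [Hsearch, ← diagonal_smul, exp_diagonal]⟩
  have hEt : NormedSpace.exp (c • Hsearch n k t)
      = (NormedSpace.exp (c • Hsearch n k (fun _ => 0))).submatrix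
          (Equiv.addRight t) (Equiv.addRight t) := by
    rw [← Hsearch_zero_submatrix_addRight k t, ← exp_submatrix_equiv _ (Equiv.addRight t)]
    rfl
  rw [hEt, hd, tens_ite_gateX_eq_toMatrix_addRight]
  exact mul_submatrix_pow_mulVec (Equiv.addRight t)
    (kpow_hadamard_mul_diagonal_mul_kpow_hadamard_submatrix_addRight t d) _ p rfl

/-- The `k`-local quantum search circuit with an arbitrary target `t` reduces to the circuit
with target `0^n`, up to the final bit-flip layer `X_C = ⊗_j X^{t_j}`. -/
theorem k_local_search_target_reduction (n k : ℕ) (hk : 1 ≤ k) (hkn : k ≤ n)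
    (t : Fin n → Fin 2) (θ : ℝ) (p : ℕ) :
    ((kpow n hadamard *
        NormedSpace.exp ((-(Complex.I * (θ : ℂ))) • Hsearch n k (fun _ => 0)) *
        kpow n hadamard *
        NormedSpace.exp ((-(Complex.I * (θ : ℂ))) • Hsearch n k t)) ^ p).mulVec (plusVec n)
      = (tens (fun j => if t j = 0 then (1 : Matrix (Fin 2) (Fin 2) ℂ) else gateX)).mulVec
          (((kpow n hadamard *
              NormedSpace.exp ((-(Complex.I * (θ : ℂ))) • Hsearch n k (fun _ => 0)) *
              kpow n hadamard *
              NormedSpace.exp ((-(Complex.I * (θ : ℂ))) • Hsearch n k (fun _ => 0))) ^ p).mulVec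
            (plusVec n)) :=
  k_local_search_target_reduction_general n k t θ p
end

section
/- Fix integers 1 ≤ k ≤ n and assignments t, x ∈ {0,1}^n, and let d be the number of positions j with x_j = t_j. Then the number of k-clauses over n Boolean variables that are satisfied by t but not by x equals C(n,k) − C(d,k), and consequently the number of k-clauses satisfied by both t and x equals (2^k − 2)·C(n,k) + C(d,k), where C(·,·) is the binomial coefficient (C(d,k) = 0 for d < k). -/
open Finset

/-- A `k`-clause over `n` Boolean variables, encoded as a partial assignment
`c : Fin n → Option (Fin 2)` whose support (the clause's variable set `S`) has size `k`;
`c j = some a` means `j ∈ S` with `ε(j) = a`. -/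
def KClause (n k : ℕ) : Type :=
  {c : Fin n → Option (Fin 2) // (Finset.univ.filter (fun j => (c j).isSome)).card = k}

instance (n k : ℕ) : Fintype (KClause n k) := by
  unfold KClause; infer_instance

instance (n k : ℕ) : DecidableEq (KClause n k) := by
  unfold KClause; infer_instance

/-- The clause `c` is satisfied by the assignment `x` iff some literal of `c` is not
violated by `x`, i.e. `∃ j ∈ S` with `x j ≠ ε(j)`. -/
def ClauseSat {n k : ℕ} (x : Fin n → Fin 2) (c : KClause n k) : Prop :=
  ∃ j a, c.1 j = some a ∧ x j ≠ a

instance {n k : ℕ} (x : Fin n → Fin 2) : DecidablePred (ClauseSat (k := k) x) := by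
  intro c; unfold ClauseSat; infer_instance

/-!
A clause falsified by an assignment `x` is determined by its support, since every literal must
read `ε(j) = x j`; so the clauses falsified by `x` whose support lies in `T` correspond to the
`k`-subsets of `T`. A clause falsified by both `x` and `t` is one falsified by `x` whose support
lies in the agreement set of `x` and `t`. Hence `C(n,k)` clauses are falsified by each of `x`
and `t` and `C(d,k)` by both, and inclusion–exclusion against the `2^k C(n,k)` clauses gives
both counts.
-/

namespace KClause

variable {n k : ℕ}

def support (c : KClause n k) : Finset (Fin n) :=
  univ.filter fun j => (c.1 j).isSome

@[simp]
lemma mem_support {c : KClause n k} {j : Fin n} : j ∈ c.support ↔ (c.1 j).isSome := by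
  simp [support]

lemma card_support (c : KClause n k) : #c.support = k := c.2

def falsifiedBy (x : Fin n → Fin 2) (S : Finset (Fin n)) (hS : #S = k) : KClause n k :=
  ⟨fun j => if j ∈ S then some (x j) else none, by
    convert hS using 2; ext j; by_cases h : j ∈ S <;> simp [h]⟩

@[simp]
lemma support_falsifiedBy (x : Fin n → Fin 2) (S : Finset (Fin n)) (hS : #S = k) :
    (falsifiedBy x S hS).support = S := by
  ext j; by_cases h : j ∈ S <;> simp [falsifiedBy, support, h]

lemma not_clauseSat_iff {x : Fin n → Fin 2} {c : KClause n k} :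
    ¬ ClauseSat x c ↔ ∀ j a, c.1 j = some a → x j = a := by
  simp [ClauseSat]

lemma not_clauseSat_falsifiedBy (x : Fin n → Fin 2) (S : Finset (Fin n)) (hS : #S = k) :
    ¬ ClauseSat x (falsifiedBy x S hS) := by
  rw [not_clauseSat_iff]
  intro j a h
  by_cases hj : j ∈ S <;> simp_all [falsifiedBy]

lemma eq_falsifiedBy_of_not_clauseSat {x : Fin n → Fin 2} {c : KClause n k}
    (h : ¬ ClauseSat x c) : c = falsifiedBy x c.support c.card_support := by
  apply Subtype.ext
  funext j
  cases hc : c.1 j with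
  | none => simp [falsifiedBy, hc]
  | some a => simp [falsifiedBy, hc, not_clauseSat_iff.1 h j a hc]

def falsifyingAssignment (c : KClause n k) : Fin n → Fin 2 := fun j => (c.1 j).getD 0

lemma not_clauseSat_falsifyingAssignment (c : KClause n k) :
    ¬ ClauseSat c.falsifyingAssignment c := by
  rw [not_clauseSat_iff]
  intro j a h
  simp [falsifyingAssignment, h]

lemma card_filter_not_clauseSat_support_subset (x : Fin n → Fin 2) (T : Finset (Fin n)) :
    #{c : KClause n k | ¬ ClauseSat x c ∧ c.support ⊆ T} = (#T).choose k := by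
  rw [← card_powersetCard k T]
  refine card_bij' (fun c _ => c.support)
    (fun S hS => falsifiedBy x S (mem_powersetCard.1 hS).2) ?_ ?_ ?_ ?_
  · intro c hc
    exact mem_powersetCard.2 ⟨(mem_filter.1 hc).2.2, c.card_support⟩
  · intro S hS
    simpa using ⟨not_clauseSat_falsifiedBy x S _, (mem_powersetCard.1 hS).1⟩
  · intro c hc
    exact (eq_falsifiedBy_of_not_clauseSat (mem_filter.1 hc).2.1).symm
  · intro S hS
    exact support_falsifiedBy x S _

lemma card_filter_not_clauseSat (x : Fin n → Fin 2) :
    #{c : KClause n k | ¬ ClauseSat x c} = n.choose k := by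
  simpa using card_filter_not_clauseSat_support_subset (k := k) x univ

lemma not_clauseSat_iff_support_subset {x t : Fin n → Fin 2} {c : KClause n k}
    (hx : ¬ ClauseSat x c) :
    ¬ ClauseSat t c ↔ c.support ⊆ univ.filter fun j => x j = t j := by
  rw [not_clauseSat_iff] at hx ⊢
  constructor
  · intro ht j hj
    obtain ⟨a, ha⟩ := Option.isSome_iff_exists.1 (mem_support.1 hj)
    simp [hx j a ha, ht j a ha]
  · intro hsub j a ha
    have hj : x j = t j := by simpa using hsub (mem_support.2 (by simp [ha]))
    rw [← hj, hx j a ha]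

lemma card_filter_not_clauseSat_and (x t : Fin n → Fin 2) :
    #{c : KClause n k | ¬ ClauseSat x c ∧ ¬ ClauseSat t c} = (agree x t).choose k := by
  rw [filter_congr fun c _ => and_congr_right not_clauseSat_iff_support_subset]
  exact card_filter_not_clauseSat_support_subset x _

lemma card_filter_support_eq (S : Finset (Fin n)) (hS : #S = k) :
    #{c : KClause n k | c.support = S} = 2 ^ k := by
  rw [show 2 ^ k = #(univ : Finset (S → Fin 2)) by simp [hS]]
  refine card_bij' (fun c _ (j : S) => c.falsifyingAssignment j)
    (fun g _ => falsifiedBy (fun j => if h : j ∈ S then g ⟨j, h⟩ else 0) S hS) ?_ ?_ ?_ ?_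
  · simp
  · simp
  · intro c hc
    obtain rfl := (mem_filter.1 hc).2
    conv_rhs => rw [eq_falsifiedBy_of_not_clauseSat (not_clauseSat_falsifyingAssignment c)]
    apply Subtype.ext
    funext j
    simp +contextual [falsifiedBy]
  · intro g _
    funext j
    simp [falsifyingAssignment, falsifiedBy]

lemma card_univ : #(univ : Finset (KClause n k)) = 2 ^ k * n.choose k := by
  rw [card_eq_sum_card_fiberwise (f := support) (t := powersetCard k univ)
    fun c _ => mem_powersetCard_univ.2 c.card_support,
    sum_const_nat fun S hS => card_filter_support_eq S (mem_powersetCard_univ.1 hS),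
    card_powersetCard, Finset.card_univ, Fintype.card_fin, Nat.mul_comm]

end KClause

theorem count_clauses_sat_t_not_x_and_both_general (n k : ℕ) (hk : 1 ≤ k)
    (t x : Fin n → Fin 2) :
    ((Finset.univ : Finset (KClause n k)).filter
        (fun c => ClauseSat t c ∧ ¬ ClauseSat x c)).card
      = n.choose k - (agree x t).choose k ∧
    ((Finset.univ : Finset (KClause n k)).filter
        (fun c => ClauseSat t c ∧ ClauseSat x c)).card
      = (2 ^ k - 2) * n.choose k + (agree x t).choose k := by
  set Fx : Finset (KClause n k) := {c | ¬ ClauseSat x c}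
  set Ft : Finset (KClause n k) := {c | ¬ ClauseSat t c}
  have hFx : #Fx = n.choose k := KClause.card_filter_not_clauseSat x
  have hFt : #Ft = n.choose k := KClause.card_filter_not_clauseSat t
  have hFxt : #(Fx ∩ Ft) = (agree x t).choose k := by
    rw [← filter_and]
    exact KClause.card_filter_not_clauseSat_and x t
  have hunion := card_union_add_card_inter Fx Ft
  have hunion_le : #(Fx ∪ Ft) ≤ 2 ^ k * n.choose k := KClause.card_univ ▸ card_le_univ _
  have hpow : 2 * n.choose k ≤ 2 ^ k * n.choose k :=
    Nat.mul_le_mul_right _ (Nat.le_self_pow (by omega) 2)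
  constructor
  · have : univ.filter (fun c => ClauseSat t c ∧ ¬ ClauseSat x c) = Fx \ (Fx ∩ Ft) := by
      ext c
      simp only [Fx, Ft, mem_filter, mem_univ, true_and, mem_sdiff, mem_inter]
      tauto
    rw [this, card_sdiff_of_subset inter_subset_left, hFx, hFxt]
  · have : univ.filter (fun c => ClauseSat t c ∧ ClauseSat x c) = univ \ (Fx ∪ Ft) := by
      ext c
      simp only [Fx, Ft, mem_filter, mem_univ, true_and, mem_sdiff, mem_union]
      tauto
    rw [this, card_sdiff_of_subset (subset_univ _), KClause.card_univ, Nat.sub_mul]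
    omega

/-- The number of `k`-clauses satisfied by `t` but not by `x` is `C(n,k) − C(d,k)`, and the
number satisfied by both is `(2^k − 2)·C(n,k) + C(d,k)`, where `d` is the number of positions
where `x` agrees with `t`. -/
theorem count_clauses_sat_t_not_x_and_both (n k : ℕ) (hk : 1 ≤ k) (hkn : k ≤ n)
    (t x : Fin n → Fin 2) :
    ((Finset.univ : Finset (KClause n k)).filter
        (fun c => ClauseSat t c ∧ ¬ ClauseSat x c)).card
      = n.choose k - (agree x t).choose k ∧
    ((Finset.univ : Finset (KClause n k)).filter
        (fun c => ClauseSat t c ∧ ClauseSat x c)).card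
      = (2 ^ k - 2) * n.choose k + (agree x t).choose k :=
  count_clauses_sat_t_not_x_and_both_general n k hk t x
end
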